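/- Let k ≥ 2 be an integer, A_max > 0, M > 1, and let P_1, …, P_{k-1}, P_k ≥ 0 be transmit powers with associated minimum half-distances d_i = √(3 P_i / (M − 1)). If √(P_k) ≥ A_max · Σ_{i=1}^{k-1} √(P_i), then for every choice of normalised amplitudes A_1, …, A_{k-1} ∈ [0, A_max] and phases ψ_1, …, ψ_{k-1} ∈ ℝ, the in-phase and quadrature distortion components satisfy |Σ_{i=1}^{k-1} d_i A_i cos ψ_i| ≤ d_k and |Σ_{i=1}^{k-1} d_i A_i sin ψ_i| ≤ d_k. -/

import Mathlib

open Finset Set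

lemma abs_sum_mul_mul_le {ι : Type*} (s : Finset ι) {a b u : ι → ℝ} {B : ℝ}
    (ha : ∀ i ∈ s, 0 ≤ a i) (hb : ∀ i ∈ s, b i ∈ Icc 0 B) (hu : ∀ i ∈ s, |u i| ≤ 1) :
    |∑ i ∈ s, a i * b i * u i| ≤ B * ∑ i ∈ s, a i := by
  rw [Finset.mul_sum]
  refine (abs_sum_le_sum_abs _ _).trans (sum_le_sum fun i hi => ?_)
  obtain ⟨hb0, hbB⟩ := hb i hi
  rw [abs_mul, abs_mul, abs_of_nonneg (ha i hi), abs_of_nonneg hb0]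
  calc a i * b i * |u i| ≤ a i * b i * 1 := by gcongr; exacts [mul_nonneg (ha i hi) hb0, hu i hi]
    _ ≤ B * a i := by nlinarith [ha i hi]

theorem swipt_power_allocation_distortion_bound_general
    (k : ℕ) (Amax M : ℝ)
    (P : ℕ → ℝ) (hP : ∀ i, 0 ≤ P i)
    (d : ℕ → ℝ) (hd : ∀ i, d i = Real.sqrt (3 * P i / (M - 1)))
    (hpow : Real.sqrt (P k) ≥ Amax * ∑ i ∈ Finset.Icc 1 (k - 1), Real.sqrt (P i))
    (A ψ : ℕ → ℝ) (hA : ∀ i ∈ Finset.Icc 1 (k - 1), A i ∈ Set.Icc 0 Amax) :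
    |∑ i ∈ Finset.Icc 1 (k - 1), d i * A i * Real.cos (ψ i)| ≤ d k ∧
    |∑ i ∈ Finset.Icc 1 (k - 1), d i * A i * Real.sin (ψ i)| ≤ d k := by
  set c := Real.sqrt (3 / (M - 1))
  have hdc (i : ℕ) : d i = c * Real.sqrt (P i) := by
    rw [hd, mul_div_right_comm, Real.sqrt_mul' _ (hP i)]
  have distortion_le (u : ℕ → ℝ) (hu : ∀ i, |u i| ≤ 1) :
      |∑ i ∈ Icc 1 (k - 1), d i * A i * u i| ≤ d k := by
    have hsum : ∑ i ∈ Icc 1 (k - 1), d i * A i * u i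
        = c * ∑ i ∈ Icc 1 (k - 1), Real.sqrt (P i) * A i * u i := by
      simp only [hdc, Finset.mul_sum, mul_assoc]
    rw [hsum, abs_mul, abs_of_nonneg (Real.sqrt_nonneg _), hdc]
    gcongr
    exact (abs_sum_mul_mul_le _ (fun i _ => Real.sqrt_nonneg _) hA fun i _ => hu i).trans hpow
  exact ⟨distortion_le _ fun _ => Real.abs_cos_le_one _,
    distortion_le _ fun _ => Real.abs_sin_le_one _⟩

/-- Theorem 1 (sufficiency): if `√(P k) ≥ A_max · Σ_{i=1}^{k-1} √(P i)`, then for any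
normalised amplitudes `A i ∈ [0, A_max]` and phases `ψ i`, the in-phase and quadrature
distortion components are bounded by `d k`, where `d i = √(3 P i / (M - 1))`. -/
theorem swipt_power_allocation_distortion_bound
    (k : ℕ) (hk : 2 ≤ k) (Amax M : ℝ) (hAmax : 0 < Amax) (hM : 1 < M)
    (P : ℕ → ℝ) (hP : ∀ i, 0 ≤ P i)
    (d : ℕ → ℝ) (hd : ∀ i, d i = Real.sqrt (3 * P i / (M - 1)))
    (hpow : Real.sqrt (P k) ≥ Amax * ∑ i ∈ Finset.Icc 1 (k - 1), Real.sqrt (P i))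
    (A ψ : ℕ → ℝ) (hA : ∀ i ∈ Finset.Icc 1 (k - 1), A i ∈ Set.Icc 0 Amax) :
    |∑ i ∈ Finset.Icc 1 (k - 1), d i * A i * Real.cos (ψ i)| ≤ d k ∧
    |∑ i ∈ Finset.Icc 1 (k - 1), d i * A i * Real.sin (ψ i)| ≤ d k :=
  swipt_power_allocation_distortion_bound_general k Amax M P hP d hd hpow A ψ hA
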